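/- Let A|B|C be a right depth three tower with quasibases γ_i, u_i. Then the pairing ⟨p, α⟩ = p¹α(p²) from P × E to V is nondegenerate and induces an isomorphism E ≅ Hom_V(P, V) of right V-modules, α ↦ ⟨-, α⟩, with inverse F ↦ Σ_i γ_i(-) F(u_i). -/

import Mathlib

open scoped BigOperators

section BTCore

variable {R M N P : Type*} [AddCommGroup M] [AddCommGroup N] [AddCommGroup P]

/-- Relations defining the balanced tensor product of `M` and `N` over the
"scalars" `R`, where `R` acts on the right of `M` via `rho` and on the left of
`N` via `lam`. -/
inductive BTRel (rho : R → M →+ M) (lam : R → N →+ N) :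
    FreeAbelianGroup (M × N) → FreeAbelianGroup (M × N) → Prop
  | addl (m m' : M) (n : N) :
      BTRel rho lam (FreeAbelianGroup.of (m + m', n))
        (FreeAbelianGroup.of (m, n) + FreeAbelianGroup.of (m', n))
  | addr (m : M) (n n' : N) :
      BTRel rho lam (FreeAbelianGroup.of (m, n + n'))
        (FreeAbelianGroup.of (m, n) + FreeAbelianGroup.of (m, n'))
  | bal (r : R) (m : M) (n : N) :
      BTRel rho lam (FreeAbelianGroup.of (rho r m, n))
        (FreeAbelianGroup.of (m, lam r n))

/-- The balanced tensor product `M ⊗_R N`. -/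
def BT (rho : R → M →+ M) (lam : R → N →+ N) : Type _ :=
  (addConGen (BTRel rho lam)).Quotient

namespace BT

variable {rho : R → M →+ M} {lam : R → N →+ N}

instance : AddGroup (BT rho lam) :=
  inferInstanceAs (AddGroup (addConGen (BTRel rho lam)).Quotient)

instance : AddCommGroup (BT rho lam) :=
  { (inferInstance : AddGroup (BT rho lam)) with
    add_comm := fun a b => by
      refine AddCon.induction_on₂ a b fun x y => ?_
      change ((x + y : FreeAbelianGroup (M × N)) :
        (addConGen (BTRel rho lam)).Quotient) = ((y + x : FreeAbelianGroup (M × N)) : _)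
      rw [add_comm] }

/-- The canonical generator `m ⊗ n`. -/
def mk (rho : R → M →+ M) (lam : R → N →+ N) (m : M) (n : N) : BT rho lam :=
  ((FreeAbelianGroup.of (m, n) : FreeAbelianGroup (M × N)) :
    (addConGen (BTRel rho lam)).Quotient)

lemma mk_rel {x y : FreeAbelianGroup (M × N)} (h : BTRel rho lam x y) :
    (x : (addConGen (BTRel rho lam)).Quotient) = (y : _) :=
  (AddCon.eq _).2 (AddConGen.Rel.of _ _ h)

lemma mk_add_left (m m' : M) (n : N) :
    mk rho lam (m + m') n = mk rho lam m n + mk rho lam m' n := by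
  have := mk_rel (BTRel.addl m m' n (rho := rho) (lam := lam))
  exact this

lemma mk_add_right (m : M) (n n' : N) :
    mk rho lam m (n + n') = mk rho lam m n + mk rho lam m n' := by
  have := mk_rel (BTRel.addr m n n' (rho := rho) (lam := lam))
  exact this

lemma mk_bal (r : R) (m : M) (n : N) :
    mk rho lam (rho r m) n = mk rho lam m (lam r n) :=
  mk_rel (BTRel.bal r m n)

/-- Lift a biadditive balanced map to the balanced tensor product. -/
def lift (rho : R → M →+ M) (lam : R → N →+ N) (φ : M → N → P)
    (h1 : ∀ m m' n, φ (m + m') n = φ m n + φ m' n)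
    (h2 : ∀ m n n', φ m (n + n') = φ m n + φ m n')
    (h3 : ∀ r m n, φ (rho r m) n = φ m (lam r n)) : BT rho lam →+ P :=
  AddCon.lift _ (FreeAbelianGroup.lift fun p => φ p.1 p.2)
    (AddCon.addConGen_le.2 (by
      rintro x y h
      cases h with
      | addl m m' n => simp [AddCon.ker_rel, FreeAbelianGroup.lift_apply_of, h1]
      | addr m n n' => simp [AddCon.ker_rel, FreeAbelianGroup.lift_apply_of, h2]
      | bal r m n => simp [AddCon.ker_rel, FreeAbelianGroup.lift_apply_of, h3]))

@[simp] lemma lift_mk (φ : M → N → P) (h1 h2 h3) (m : M) (n : N) :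
    lift rho lam φ h1 h2 h3 (mk rho lam m n) = φ m n := by
  show (addConGen (BTRel rho lam)).lift _ _ ((FreeAbelianGroup.of (m, n) :
    FreeAbelianGroup (M × N)) : (addConGen (BTRel rho lam)).Quotient) = _
  rw [AddCon.lift_coe, FreeAbelianGroup.lift_apply_of]

/-- Induction principle for the balanced tensor product. -/
protected lemma ind {motive : BT rho lam → Prop} (zero : motive 0)
    (mk' : ∀ m n, motive (mk rho lam m n)) (neg : ∀ x, motive x → motive (-x))
    (add : ∀ x y, motive x → motive y → motive (x + y)) : ∀ x : BT rho lam, motive x := by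
  intro x
  refine AddCon.induction_on x fun z => ?_
  induction z using FreeAbelianGroup.induction_on with
  | zero => exact zero
  | of p => exact mk' p.1 p.2
  | neg p h =>
      have : ((-FreeAbelianGroup.of p : FreeAbelianGroup (M × N)) :
          (addConGen (BTRel rho lam)).Quotient) = -(mk rho lam p.1 p.2) := rfl
      rw [this]; exact neg _ (mk' p.1 p.2)
  | add x y hx hy =>
      have : ((x + y : FreeAbelianGroup (M × N)) :
          (addConGen (BTRel rho lam)).Quotient) = (x : _) + (y : _) := rfl
      rw [this]; exact add _ _ hx hy

lemma hom_ext {f g : BT rho lam →+ P}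
    (h : ∀ m n, f (mk rho lam m n) = g (mk rho lam m n)) : f = g := by
  ext x
  refine BT.ind (motive := fun x => f x = g x) ?_ ?_ ?_ ?_ x
  · simp
  · exact h
  · intro y hy; simp [hy]
  · intro y z hy hz; simp [hy, hz]

end BT

end BTCore

section Tensor

variable {B A C P : Type*} [Ring B] [Ring A] [Ring C] [AddCommGroup P]

/-- The tensor product `A ⊗_B A` relative to a ring homomorphism `g : B →+* A`. -/
def Tsr (g : B →+* A) : Type _ :=
  BT (fun b => AddMonoidHom.mulRight (g b)) (fun b => AddMonoidHom.mulLeft (g b))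

instance (g : B →+* A) : AddCommGroup (Tsr g) := inferInstanceAs (AddCommGroup (BT _ _))

namespace Tsr

variable (g : B →+* A)

/-- The generator `x ⊗_B y` of `Tsr g`. -/
def tmk (x y : A) : Tsr g := BT.mk _ _ x y

lemma tmk_add_left (x x' y : A) : tmk g (x + x') y = tmk g x y + tmk g x' y :=
  BT.mk_add_left x x' y

lemma tmk_add_right (x y y' : A) : tmk g x (y + y') = tmk g x y + tmk g x y' :=
  BT.mk_add_right x y y'

lemma tmk_bal (x : A) (b : B) (y : A) : tmk g (x * g b) y = tmk g x (g b * y) :=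
  BT.mk_bal b x y

/-- Lift a biadditive `B`-balanced map `A × A → P` to `Tsr g`. -/
def tlift (φ : A → A → P)
    (h1 : ∀ x x' y, φ (x + x') y = φ x y + φ x' y)
    (h2 : ∀ x y y', φ x (y + y') = φ x y + φ x y')
    (h3 : ∀ x b y, φ (x * g b) y = φ x (g b * y)) : Tsr g →+ P :=
  BT.lift _ _ φ h1 h2 (fun r m n => h3 m r n)

@[simp] lemma tlift_mk (φ : A → A → P) (h1 h2 h3) (x y : A) :
    tlift g φ h1 h2 h3 (tmk g x y) = φ x y :=
  BT.lift_mk φ h1 h2 _ x y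

lemma thom_ext {g : B →+* A} {f f' : Tsr g →+ P}
    (h : ∀ x y, f (tmk g x y) = f' (tmk g x y)) : f = f' :=
  BT.hom_ext h

/-- Left multiplication by `a ∈ A` on the first tensorand. -/
def lmul (a : A) : Tsr g →+ Tsr g :=
  tlift g (fun x y => tmk g (a * x) y)
    (fun x x' y => by rw [mul_add, tmk_add_left])
    (fun x y y' => by rw [tmk_add_right])
    (fun x b y => by rw [← mul_assoc, tmk_bal])

@[simp] lemma lmul_mk (a x y : A) : lmul g a (tmk g x y) = tmk g (a * x) y :=
  tlift_mk g _ _ _ _ x y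

/-- Right multiplication by `a ∈ A` on the second tensorand. -/
def rmul (a : A) : Tsr g →+ Tsr g :=
  tlift g (fun x y => tmk g x (y * a))
    (fun x x' y => by rw [tmk_add_left])
    (fun x y y' => by rw [add_mul, tmk_add_right])
    (fun x b y => by rw [tmk_bal, mul_assoc])

@[simp] lemma rmul_mk (a x y : A) : rmul g a (tmk g x y) = tmk g x (y * a) :=
  tlift_mk g _ _ _ _ x y

lemma lmul_lmul (a a' : A) (p : Tsr g) : lmul g a (lmul g a' p) = lmul g (a * a') p := by
  have : ((lmul g a).comp (lmul g a')) = lmul g (a * a') :=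
    thom_ext fun x y => by simp [mul_assoc]
  exact DFunLike.congr_fun this p

lemma rmul_rmul (a a' : A) (p : Tsr g) : rmul g a (rmul g a' p) = rmul g (a' * a) p := by
  have : ((rmul g a).comp (rmul g a')) = rmul g (a' * a) :=
    thom_ext fun x y => by simp [mul_assoc]
  exact DFunLike.congr_fun this p

lemma lmul_rmul (a a' : A) (p : Tsr g) : lmul g a (rmul g a' p) = rmul g a' (lmul g a p) := by
  have : ((lmul g a).comp (rmul g a')) = (rmul g a').comp (lmul g a) :=
    thom_ext fun x y => by simp
  exact DFunLike.congr_fun this p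

lemma lmul_add_smul (a a' : A) (p : Tsr g) :
    lmul g (a + a') p = lmul g a p + lmul g a' p := by
  have : lmul g (a + a') = lmul g a + lmul g a' :=
    thom_ext fun x y => by simp [add_mul, tmk_add_left]
  rw [this]; rfl

lemma rmul_add_smul (a a' : A) (p : Tsr g) :
    rmul g (a + a') p = rmul g a p + rmul g a' p := by
  have : rmul g (a + a') = rmul g a + rmul g a' :=
    thom_ext fun x y => by simp [mul_add, tmk_add_right]
  rw [this]; rfl

/-- The multiplication map `μ : A ⊗_B A → A`. -/
def mulmap : Tsr g →+ A :=
  tlift g (fun x y => x * y) (fun x x' y => by rw [add_mul])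
    (fun x y y' => by rw [mul_add]) (fun x b y => by rw [mul_assoc])

@[simp] lemma mulmap_mk (x y : A) : mulmap g (tmk g x y) = x * y := tlift_mk g _ _ _ _ x y

end Tsr

section TowerDefs

open Tsr

variable (g : B →+* A) (hC : C →+* A)

/-- `p ∈ (A ⊗_B A)^C` : the `C`-centralizer condition, where `C` maps to `A` via `hC`. -/
def TCent (p : Tsr g) : Prop := ∀ c : C, lmul g (hC c) p = rmul g (hC c) p

/-- `α ∈ End_B A_C` : additive endomorphisms of `A` that are left `B`-linear
(via `g`) and right `C`-linear (via `hC`). -/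
def EndBAC (α : A →+ A) : Prop :=
  (∀ (b : B) (x : A), α (g b * x) = g b * α x) ∧
  ∀ (x : A) (c : C), α (x * hC c) = α x * hC c

/-- The tower is right depth three: `A ⊗_B A` is isomorphic, as `A`-`C`-bimodules,
to a direct summand of `A^n` for some `n`. Here the left `A`-action and right
`C`-action on `A^n` are componentwise, and on `Tsr g` they are `lmul` and `rmul`. -/
def IsRightD3 : Prop :=
  ∃ (n : ℕ) (π : (Fin n → A) →+ Tsr g) (σ : Tsr g →+ (Fin n → A)),
    (∀ (a : A) (v : Fin n → A), π (fun i => a * v i) = lmul g a (π v)) ∧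
    (∀ (c : C) (v : Fin n → A), π (fun i => v i * hC c) = rmul g (hC c) (π v)) ∧
    (∀ (a : A) (p : Tsr g) (i : Fin n), σ (lmul g a p) i = a * σ p i) ∧
    (∀ (c : C) (p : Tsr g) (i : Fin n), σ (rmul g (hC c) p) i = σ p i * hC c) ∧
    (∀ p : Tsr g, π (σ p) = p)

end TowerDefs

end Tensor

open Tsr

section Extra

open Tsr

variable {C B A : Type*} [Ring C] [Ring B] [Ring A] (f : C →+* B) (g : B →+* A)

/-- For `γ` left `B`-linear, the map `A ⊗_B A → A`, `p = p¹ ⊗ p² ↦ p¹ * γ p²`. -/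
def phiMap (γ : A →+ A)
    (hγ : ∀ (b : B) (x : A), γ (g b * x) = g b * γ x) : Tsr g →+ A :=
  tlift g (fun x y => x * γ y)
    (fun x x' y => by rw [add_mul])
    (fun x y y' => by rw [map_add, mul_add])
    (fun x b y => by rw [hγ, mul_assoc])

/-- The centralizer `V = A^C` of the image of `C` in `A`. -/
def Vc : Subring A := Subring.centralizer (Set.range ⇑(g.comp f))

lemma Vc_comm {v : A} (hv : v ∈ Vc f g) (c : C) :
    (g.comp f) c * v = v * (g.comp f) c :=
  Subring.mem_centralizer_iff.mp hv _ ⟨c, rfl⟩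

/-- `P = (A ⊗_B A)^C` as an additive subgroup of `A ⊗_B A`. -/
def PCsub : AddSubgroup (Tsr g) where
  carrier := {p | TCent g (g.comp f) p}
  add_mem' := fun hp hq c => by simp only [map_add, hp c, hq c]
  zero_mem' := fun c => by simp
  neg_mem' := fun hp c => by simp only [map_neg, hp c]

lemma cent_lmul {v : A} (hv : ∀ c : C, (g.comp f) c * v = v * (g.comp f) c)
    {p : Tsr g} (hp : TCent g (g.comp f) p) :
    TCent g (g.comp f) (lmul g v p) := fun c => by
  rw [lmul_lmul, hv c, ← lmul_lmul, hp c, lmul_rmul]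

lemma cent_rmul {v : A} (hv : ∀ c : C, (g.comp f) c * v = v * (g.comp f) c)
    {p : Tsr g} (hp : TCent g (g.comp f) p) :
    TCent g (g.comp f) (rmul g v p) := fun c => by
  rw [lmul_rmul, hp c, rmul_rmul, hv c, ← rmul_rmul]

/-- The left action of `v ∈ V` on `P = (A ⊗_B A)^C`. -/
def smulL (v : Vc f g) : ↥(PCsub f g) →+ ↥(PCsub f g) :=
  AddMonoidHom.mk' (fun p => ⟨lmul g (v : A) p.1, cent_lmul f g (Vc_comm f g v.2) p.2⟩)
    (fun p q => Subtype.ext (by simp))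

/-- The right action of `v ∈ V` on `P = (A ⊗_B A)^C`. -/
def smulR (v : Vc f g) : ↥(PCsub f g) →+ ↥(PCsub f g) :=
  AddMonoidHom.mk' (fun p => ⟨rmul g (v : A) p.1, cent_rmul f g (Vc_comm f g v.2) p.2⟩)
    (fun p q => Subtype.ext (by simp))

end Extra

/-!
The quasibasis identity `x ⊗ y = ∑ i x γ_i(y) u_i` is a dual-basis formula. Pairing `1 ⊗ x`
with `α` gives `α x = ∑ i γ_i(x) ⟨u_i, α⟩`, so `α` is determined by its pairings with the
`C`-central elements `u_i`; and applying it termwise to `p` gives `p = ∑ i ⟨p, γ_i⟩ u_i`, so `p`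
is determined by its pairings with the `γ_i`. For `p ∈ P` the coefficients `⟨p, γ_i⟩` lie in `V`,
hence any left `V`-linear `F` satisfies `F p = ∑ i ⟨p, γ_i⟩ F(u_i)`.
-/

section Pairing

variable {C B A : Type*} [Ring C] [Ring B] [Ring A] (g : B →+* A)

@[simp] lemma phiMap_mk (γ : A →+ A) (hγ) (x y : A) :
    phiMap g γ hγ (tmk g x y) = x * γ y :=
  tlift_mk g _ _ _ _ x y

lemma phiMap_lmul (γ : A →+ A) (hγ) (a : A) (p : Tsr g) :
    phiMap g γ hγ (lmul g a p) = a * phiMap g γ hγ p := by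
  have h : (phiMap g γ hγ).comp (lmul g a) = (AddMonoidHom.mulLeft a).comp (phiMap g γ hγ) :=
    thom_ext fun x y => by simp [mul_assoc]
  exact DFunLike.congr_fun h p

lemma phiMap_rmul (γ : A →+ A) (hγ) {a : A} (ha : ∀ x, γ (x * a) = γ x * a) (p : Tsr g) :
    phiMap g γ hγ (rmul g a p) = phiMap g γ hγ p * a := by
  have h : (phiMap g γ hγ).comp (rmul g a) = (AddMonoidHom.mulRight a).comp (phiMap g γ hγ) :=
    thom_ext fun x y => by simp [ha, mul_assoc]
  exact DFunLike.congr_fun h p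

lemma phiMap_commute_of_TCent (hC : C →+* A) {α : A →+ A} (hα : EndBAC g hC α) {p : Tsr g}
    (hp : TCent g hC p) (c : C) :
    hC c * phiMap g α hα.1 p = phiMap g α hα.1 p * hC c := by
  rw [← phiMap_lmul, hp c, phiMap_rmul g α hα.1 (fun x => hα.2 x c)]

def lmulAt (u : Tsr g) : A →+ Tsr g :=
  AddMonoidHom.mk' (fun a => lmul g a u) (fun a b => lmul_add_smul g a b u)

@[simp] lemma lmulAt_apply (u : Tsr g) (a : A) : lmulAt g u a = lmul g a u := rfl

section Quasibasis

variable {n : ℕ} {γ : Fin n → (A →+ A)} {u : Fin n → Tsr g}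
  (hqb : ∀ x y : A, tmk g x y = ∑ i, lmul g (x * γ i y) (u i))
include hqb

lemma eq_sum_lmul_phiMap (hγ : ∀ i (b : B) (x : A), γ i (g b * x) = g b * γ i x) (p : Tsr g) :
    p = ∑ i, lmul g (phiMap g (γ i) (hγ i) p) (u i) := by
  have h : AddMonoidHom.id (Tsr g) = ∑ i, (lmulAt g (u i)).comp (phiMap g (γ i) (hγ i)) :=
    thom_ext fun x y => by simpa using hqb x y
  simpa using DFunLike.congr_fun h p

lemma apply_eq_sum_mul_phiMap (α : A →+ A) (hα) (x : A) :
    α x = ∑ i, γ i x * phiMap g α hα (u i) := by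
  simpa [phiMap_lmul] using congrArg (phiMap g α hα) (hqb 1 x)

end Quasibasis

end Pairing

section InvariantPairing

variable {C B A : Type*} [Ring C] [Ring B] [Ring A] (f : C →+* B) (g : B →+* A)

lemma phiMap_mem_Vc {α : A →+ A} (hα : EndBAC g (g.comp f) α) (p : PCsub f g) :
    phiMap g α hα.1 p ∈ Vc f g :=
  Subring.mem_centralizer_iff.mpr <| by
    rintro _ ⟨c, rfl⟩
    exact phiMap_commute_of_TCent g (g.comp f) hα p.2 c

variable {f g} {n : ℕ} {γ : Fin n → (A →+ A)} {u : Fin n → Tsr g}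
  (hγ : ∀ i, EndBAC g (g.comp f) (γ i)) (hu : ∀ i, TCent g (g.comp f) (u i))
  (hqb : ∀ x y : A, tmk g x y = ∑ i, lmul g (x * γ i y) (u i))
include hqb

lemma PCsub_eq_sum_smulL (p : PCsub f g) :
    p = ∑ i, smulL f g ⟨_, phiMap_mem_Vc f g (hγ i) p⟩ ⟨u i, hu i⟩ := by
  apply Subtype.ext
  rw [AddSubgroup.val_finsetSum]
  exact eq_sum_lmul_phiMap g hqb (fun i => (hγ i).1) p

lemma eq_sum_phiMap_mul_of_map_smulL (F : PCsub f g →+ A)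
    (hF : ∀ (v : Vc f g) (p : PCsub f g), F (smulL f g v p) = (v : A) * F p) (p : PCsub f g) :
    F p = ∑ i, phiMap g (γ i) (hγ i).1 p * F ⟨u i, hu i⟩ := by
  conv_lhs => rw [PCsub_eq_sum_smulL hγ hu hqb p]
  simp only [map_sum, hF]

end InvariantPairing

/-- For a right depth three tower with quasibases `γ_i`, `u_i`, the
pairing `⟨p, α⟩ = p¹ α(p²)` from `P × E` to `V` is nondegenerate and induces an
isomorphism `E ≅ Hom_V(P, V)`, `α ↦ ⟨-, α⟩`, with inverse `F ↦ ∑ i γ_i(-) F(u_i)`. -/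
theorem pairing_nondegenerate {C B A : Type*} [Ring C] [Ring B] [Ring A]
    (f : C →+* B) (g : B →+* A) (n : ℕ) (γ : Fin n → (A →+ A)) (u : Fin n → Tsr g)
    (hγ : ∀ i, EndBAC g (g.comp f) (γ i)) (hu : ∀ i, TCent g (g.comp f) (u i))
    (hqb : ∀ x y : A, tmk g x y = ∑ i, lmul g (x * γ i y) (u i)) :
    (∀ (α : A →+ A) (hα : EndBAC g (g.comp f) α) (p : Tsr g), TCent g (g.comp f) p →
        ∀ c : C, (g.comp f) c * phiMap g α hα.1 p = phiMap g α hα.1 p * (g.comp f) c) ∧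
    (∀ (α : A →+ A) (hα : EndBAC g (g.comp f) α),
        (∀ p : Tsr g, TCent g (g.comp f) p → phiMap g α hα.1 p = 0) → α = 0) ∧
    (∀ p : Tsr g, TCent g (g.comp f) p →
        (∀ (α : A →+ A) (hα : EndBAC g (g.comp f) α), phiMap g α hα.1 p = 0) → p = 0) ∧
    (∀ (α : A →+ A) (hα : EndBAC g (g.comp f) α) (x : A),
        α x = ∑ i, γ i x * phiMap g α hα.1 (u i)) ∧
    (∀ Fm : ↥(PCsub f g) →+ A,
        (∀ p : ↥(PCsub f g), ∀ c : C, (g.comp f) c * Fm p = Fm p * (g.comp f) c) →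
        (∀ (v : Vc f g) (p : ↥(PCsub f g)), Fm (smulL f g v p) = (v : A) * Fm p) →
        ∀ p : ↥(PCsub f g),
          Fm p = ∑ i, phiMap g (γ i) (hγ i).1 (p : Tsr g) * Fm ⟨u i, hu i⟩) := by
  refine ⟨fun α hα p hp => phiMap_commute_of_TCent g (g.comp f) hα hp, ?_, ?_,
    fun α hα => apply_eq_sum_mul_phiMap g hqb α hα.1,
    fun F _ hF => eq_sum_phiMap_mul_of_map_smulL hγ hu hqb F hF⟩
  · intro α hα hzero
    ext x
    simp [apply_eq_sum_mul_phiMap g hqb α hα.1 x, hzero _ (hu _)]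
  · intro p _ hzero
    rw [eq_sum_lmul_phiMap g hqb (fun i => (hγ i).1) p]
    simp only [hzero _ (hγ _)]
    exact Finset.sum_eq_zero fun i _ => map_zero (lmulAt g (u i))
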